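/- Let n ≥ 2, ω = exp(2πi/n), let Aₙ ∈ Mₙ(ℂ) be the diagonal matrix with (Aₙ)_{jj} = ω^j for j = 0,…,n−1, and let B̂ₙ be the cyclic shift matrix with (B̂ₙ)_{jk} = 1 if j ≡ k+1 (mod n) and 0 otherwise. Then for every n×n permutation matrix P and all (x,y,z) ∈ ℂ³: det(x·PᵀAₙP + y·B̂ₙ + z·(PᵀAₙP)B̂ₙ − I) = 0 if and only if xⁿ + yⁿ + (−1)^{n−1} zⁿ = 1. -/

import Mathlib

open Matrix Complex

noncomputable section

/-- A permutation matrix: the matrix of a permutation `σ`, sending the standard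
basis vector `e j` to `e (σ j)`. -/
def IsPermMatrix {n : ℕ} (P : Matrix (Fin n) (Fin n) ℂ) : Prop :=
  ∃ σ : Equiv.Perm (Fin n),
    P = Matrix.of fun i j : Fin n => if i = σ j then 1 else 0

/-!
Conjugation by a permutation matrix only permutes the diagonal of `Aₙ`, so the pencil
`x PᵀAₙP + y B̂ₙ + z PᵀAₙP B̂ₙ - I` is cyclic bidiagonal: `x μⱼ - 1` on the diagonal and
`y + z μⱼ` on the cyclic subdiagonal, where `μ` runs through the `n`-th roots of unity in
some order. In the Leibniz expansion of such a matrix only the identity and the `n`-cycle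
contribute, so its determinant is `∏ (x μⱼ - 1) + (-1)ⁿ⁻¹ ∏ (y + z μⱼ)`, and both products
are evaluated by `∏_ζ (a - ζ b) = aⁿ - bⁿ`.
-/

namespace IsPrimitiveRoot

variable {R : Type*} [CommRing R] [IsDomain R] {ζ : R} {n : ℕ} [NeZero n]

theorem prod_fin_sub_pow_mul (h : IsPrimitiveRoot ζ n) (a b : R) :
    ∏ j : Fin n, (a - ζ ^ (j : ℕ) * b) = a ^ n - b ^ n := by
  have hn : 0 < n := Nat.pos_of_neZero n
  rw [h.pow_sub_pow_eq_prod_sub_mul a b hn]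
  refine Finset.prod_bij (fun j _ => ζ ^ (j : ℕ)) (fun j _ => ?_)
    (fun i _ j _ hij => Fin.ext (h.pow_inj i.isLt j.isLt hij)) (fun ξ hξ => ?_) (fun _ _ => rfl)
  · rw [Polynomial.mem_nthRootsFinset hn, ← pow_mul, mul_comm, pow_mul, h.pow_eq_one, one_pow]
  · obtain ⟨i, hi, rfl⟩ := h.eq_pow_of_pow_eq_one ((Polynomial.mem_nthRootsFinset hn _).1 hξ)
    exact ⟨⟨i, hi⟩, Finset.mem_univ _, rfl⟩

theorem prod_mul_pow_sub_one (h : IsPrimitiveRoot ζ n) (x : R) :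
    ∏ j : Fin n, (x * ζ ^ (j : ℕ) - 1) = (-1) ^ n * (1 - x ^ n) := by
  calc ∏ j : Fin n, (x * ζ ^ (j : ℕ) - 1) = ∏ j : Fin n, -(1 - ζ ^ (j : ℕ) * x) := by
        simp only [neg_sub, mul_comm]
    _ = (-1) ^ n * (1 - x ^ n) := by
        rw [Finset.prod_neg, h.prod_fin_sub_pow_mul, one_pow, Finset.card_univ, Fintype.card_fin]

theorem prod_add_mul_pow (h : IsPrimitiveRoot ζ n) (y z : R) :
    ∏ j : Fin n, (y + z * ζ ^ (j : ℕ)) = y ^ n - (-z) ^ n := by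
  rw [← h.prod_fin_sub_pow_mul]
  simp only [mul_neg, sub_neg_eq_add, mul_comm]

end IsPrimitiveRoot

open Fin.NatCast in
theorem Equiv.Perm.eq_one_or_eq_finRotate {m : ℕ} (σ : Equiv.Perm (Fin (m + 2)))
    (h : ∀ i, σ i = i ∨ σ i = i + 1) : σ = 1 ∨ σ = finRotate (m + 2) := by
  by_cases hfix : ∀ i, σ i = i
  · exact Or.inl (Equiv.ext hfix)
  push Not at hfix
  obtain ⟨i₀, hi₀⟩ := hfix
  have step : ∀ i, σ i = i + 1 → σ (i + 1) = i + 1 + 1 := fun i hi =>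
    (h (i + 1)).resolve_left fun h' => by simpa using σ.injective (h'.trans hi.symm)
  have shift : ∀ k : ℕ, σ (i₀ + k) = i₀ + k + 1 := by
    intro k
    induction k with
    | zero => simpa using (h i₀).resolve_left hi₀
    | succ k ih => simpa [add_assoc] using step _ ih
  refine Or.inr (Equiv.ext fun j => ?_)
  simpa [finRotate_apply] using shift (j - i₀ : Fin (m + 2)).val

def cyclicShift (R : Type*) [Zero R] [One R] (n : ℕ) [NeZero n] : Matrix (Fin n) (Fin n) R :=
  of fun j k => if j = k + 1 then 1 else 0

def cyclicBidiagonal {R : Type*} [Zero R] {n : ℕ} [NeZero n] (d c : Fin n → R) :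
    Matrix (Fin n) (Fin n) R :=
  of fun j k => if j = k then d j else if j = k + 1 then c j else 0

theorem Fin.eq_add_one_iff_val_mod {n : ℕ} [NeZero n] (j k : Fin n) :
    j = k + 1 ↔ (j : ℕ) % n = ((k : ℕ) + 1) % n := by
  rw [Fin.ext_iff, Fin.val_add, Fin.val_one', Nat.add_mod_mod, Nat.mod_eq_of_lt j.isLt]

theorem transpose_mul_diagonal_mul_of_perm {ι R : Type*} [Fintype ι] [DecidableEq ι] [Semiring R]
    (σ : Equiv.Perm ι) (f : ι → R) :
    (of fun i j => if i = σ j then (1 : R) else 0)ᵀ * diagonal f *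
      (of fun i j => if i = σ j then (1 : R) else 0) = diagonal (f ∘ σ) := by
  ext i j
  rcases eq_or_ne i j with rfl | h <;> simp [mul_apply, diagonal_apply, *, Ne.symm]

theorem smul_diagonal_add_smul_cyclicShift_sub_one {R : Type*} [CommRing R] {m : ℕ}
    (μ : Fin (m + 2) → R) (x y z : R) :
    x • diagonal μ + y • cyclicShift R (m + 2) + z • (diagonal μ * cyclicShift R (m + 2)) - 1 =
      cyclicBidiagonal (fun j => x * μ j - 1) (fun j => y + z * μ j) := by
  ext j k
  rcases eq_or_ne j k with rfl | hjk
  · simp [cyclicShift, cyclicBidiagonal]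
  · by_cases hjk1 : j = k + 1 <;> simp [cyclicShift, cyclicBidiagonal, hjk, hjk1]

theorem det_cyclicBidiagonal {R : Type*} [CommRing R] {m : ℕ} (d c : Fin (m + 2) → R) :
    (cyclicBidiagonal d c).det = ∏ j, d j + (-1) ^ (m + 1) * ∏ j, c j := by
  -- only the identity and the rotation `i ↦ i + 1` pick nonzero entries in every column
  rw [det_apply, Fintype.sum_eq_add 1 (finRotate (m + 2))]
  · simp [cyclicBidiagonal, Units.smul_def]
    exact congrArg _ (Equiv.prod_comp (Equiv.addRight 1) c)
  · intro h
    simpa using congrArg (· 0) h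
  · rintro σ ⟨hne1, hneRot⟩
    obtain ⟨i, hi⟩ : ∃ i, ¬(σ i = i ∨ σ i = i + 1) := by
      by_contra! hall
      exact (σ.eq_one_or_eq_finRotate hall).elim hne1 hneRot
    push Not at hi
    rw [Finset.prod_eq_zero (Finset.mem_univ i), smul_zero]
    simp [cyclicBidiagonal, hi.1, hi.2]

theorem stmt_10 (n : ℕ) (hn : 2 ≤ n)
    (ω : ℂ) (hω : ω = Complex.exp (2 * Real.pi * Complex.I / n))
    (A Bhat : Matrix (Fin n) (Fin n) ℂ)
    (hA : A = Matrix.diagonal (fun j : Fin n => ω ^ (j : ℕ)))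
    (hBhat : Bhat = Matrix.of fun j k : Fin n =>
      if (j : ℕ) % n = ((k : ℕ) + 1) % n then 1 else 0) :
    ∀ P : Matrix (Fin n) (Fin n) ℂ, IsPermMatrix P →
      ∀ x y z : ℂ,
        (x • (Pᵀ * A * P) + y • Bhat + z • ((Pᵀ * A * P) * Bhat) - 1).det = 0 ↔
          x ^ n + y ^ n + (-1 : ℂ) ^ (n - 1) * z ^ n = 1 := by
  obtain ⟨m, rfl⟩ : ∃ m, n = m + 2 := ⟨n - 2, by omega⟩
  rintro P ⟨σ, rfl⟩ x y z
  have hprim : IsPrimitiveRoot ω (m + 2) := hω ▸ Complex.isPrimitiveRoot_exp _ (by omega)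
  have hB : Bhat = cyclicShift ℂ (m + 2) := by
    simp only [hBhat, cyclicShift, ← Fin.eq_add_one_iff_val_mod]
  rw [hA, hB, transpose_mul_diagonal_mul_of_perm, smul_diagonal_add_smul_cyclicShift_sub_one,
    det_cyclicBidiagonal]
  simp only [Function.comp_apply]
  rw [Equiv.prod_comp σ (fun j : Fin (m + 2) => x * ω ^ (j : ℕ) - 1),
    Equiv.prod_comp σ (fun j : Fin (m + 2) => y + z * ω ^ (j : ℕ)),
    hprim.prod_mul_pow_sub_one, hprim.prod_add_mul_pow, show m + 2 - 1 = m + 1 from rfl]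
  have hdet : (-1 : ℂ) ^ (m + 2) * (1 - x ^ (m + 2)) +
      (-1) ^ (m + 1) * (y ^ (m + 2) - (-z) ^ (m + 2)) =
      (-1) ^ (m + 1) * (x ^ (m + 2) + y ^ (m + 2) + (-1) ^ (m + 1) * z ^ (m + 2) - 1) := by
    rw [neg_pow z]; ring
  rw [hdet, mul_eq_zero, sub_eq_zero, or_iff_right (pow_ne_zero _ (neg_ne_zero.2 one_ne_zero))]
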